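/- In the DGA Λ(α,β,γ,η) on four degree-1 generators with dα = dβ = 0, dγ = −αβ, dη = βγ, the Massey product ⟨[β],[α],[α]⟩ is defined (since [β][α] = −[αβ] = [−dγ] = 0 and [α][α] = 0) and is represented by [γα], which is nonzero in H² modulo [β]H¹ + H¹[α]. -/

import Mathlib

/-- A graded-commutative differential graded algebra over ℝ: an ℝ-algebra equipped with
a grading by submodules `deg i`, and a differential `d` of degree +1 squaring to zero,
satisfying the Leibniz rule and graded commutativity on homogeneous elements. -/
structure GCDGA (A : Type) [Ring A] [Algebra ℝ A] where
  deg : ℕ → Submodule ℝ A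
  one_mem : (1 : A) ∈ deg 0
  mul_mem : ∀ {i j : ℕ} {a b : A}, a ∈ deg i → b ∈ deg j → a * b ∈ deg (i + j)
  d : A →ₗ[ℝ] A
  d_d : ∀ a : A, d (d a) = 0
  d_mem : ∀ {i : ℕ} {a : A}, a ∈ deg i → d a ∈ deg (i + 1)
  leibniz : ∀ {i : ℕ} (a b : A), a ∈ deg i →
    d (a * b) = d a * b + ((-1 : ℝ) ^ i) • (a * d b)
  gcomm : ∀ {i j : ℕ} (a b : A), a ∈ deg i → b ∈ deg j →
    a * b = ((-1 : ℝ) ^ (i * j)) • (b * a)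


/-!
Let `φ` and `ψ` be the coordinate functionals along `αγ` and `αβ`. On degree-1 elements `x`,
`φ` kills `dx` and `βx`, while `φ(xα) = ψ(dx)`: both are minus the `γ`-coefficient of `x`.
Applying `φ` to `βw + ξα = dσ + βc + c'α` thus gives `ψ(dξ) = ψ(dc')`, i.e. `ψ(βα) = 0`,
which is false as `βα = -αβ`. Taking `ξ = γ` and `w = c = c' = 0` shows `[γα] ≠ 0`.
-/

namespace GCDGA

variable {A : Type} [Ring A] [Algebra ℝ A] (D : GCDGA A)

theorem mul_anticomm_of_mem_deg_one {a b : A} (ha : a ∈ D.deg 1) (hb : b ∈ D.deg 1) :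
    a * b = -(b * a) := by
  simpa using D.gcomm a b ha hb

theorem mul_self_eq_zero_of_mem_deg_one {a : A} (ha : a ∈ D.deg 1) : a * a = 0 := by
  have h : (2 : ℝ) • (a * a) = 0 := by
    rw [two_smul]
    nth_rewrite 1 [D.mul_anticomm_of_mem_deg_one ha ha]
    exact neg_add_cancel _
  exact (smul_eq_zero.mp h).resolve_left two_ne_zero

theorem massey_ne_indeterminacy_of_separating (φ ψ : A →ₗ[ℝ] ℝ) {a b : A}
    (hφd : ∀ x ∈ D.deg 1, φ (D.d x) = 0)
    (hφleft : ∀ x ∈ D.deg 1, φ (b * x) = 0)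
    (hφright : ∀ x ∈ D.deg 1, φ (x * a) = ψ (D.d x))
    (hψ : ψ (b * a) ≠ 0) ⦃ξ w σ c c' : A⦄ (hξ : ξ ∈ D.deg 1) (hw : w ∈ D.deg 1)
    (hσ : σ ∈ D.deg 1) (hc : c ∈ D.deg 1) (hc' : c' ∈ D.deg 1)
    (hdξ : D.d ξ = b * a) (hdc' : D.d c' = 0) :
    b * w + ξ * a ≠ D.d σ + b * c + c' * a := by
  intro h
  have hφ := congrArg φ h
  rw [map_add, map_add, map_add, hφleft w hw, hφright ξ hξ, hdξ, hφd σ hσ, hφleft c hc,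
    hφright c' hc', hdc'] at hφ
  exact hψ (by simpa using hφ)

variable {α β γ η : A} (φ ψ : A →ₗ[ℝ] ℝ)

theorem apply_d_eq_zero_of_mem_span (dα : D.d α = 0) (dβ : D.d β = 0)
    (dγ : D.d γ = -(α * β)) (dη : D.d η = β * γ) (hαβ : φ (α * β) = 0) (hβγ : φ (β * γ) = 0)
    {x : A} (hx : x ∈ Submodule.span ℝ {α, β, γ, η}) : φ (D.d x) = 0 := by
  have key : Set.EqOn (φ ∘ₗ D.d) (0 : A →ₗ[ℝ] ℝ) {α, β, γ, η} := by
    rintro _ (rfl | rfl | rfl | rfl) <;> simp [dα, dβ, dγ, dη, hαβ, hβγ]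
  simpa using LinearMap.eqOn_span key hx

theorem apply_mul_left_eq_zero_of_mem_span (hα : α ∈ D.deg 1) (hβ : β ∈ D.deg 1)
    (hαβ : φ (α * β) = 0) (hβγ : φ (β * γ) = 0) (hβη : φ (β * η) = 0)
    {x : A} (hx : x ∈ Submodule.span ℝ {α, β, γ, η}) : φ (β * x) = 0 := by
  have key :
      Set.EqOn (φ ∘ₗ LinearMap.mulLeft ℝ β) (0 : A →ₗ[ℝ] ℝ) {α, β, γ, η} := by
    rintro _ (rfl | rfl | rfl | rfl) <;>
      simp [D.mul_anticomm_of_mem_deg_one hβ hα, D.mul_self_eq_zero_of_mem_deg_one hβ, hαβ,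
        hβγ, hβη]
  simpa using LinearMap.eqOn_span key hx

theorem apply_mul_right_eq_apply_d_of_mem_span (hα : α ∈ D.deg 1) (hβ : β ∈ D.deg 1)
    (hγ : γ ∈ D.deg 1) (hη : η ∈ D.deg 1) (dα : D.d α = 0) (dβ : D.d β = 0)
    (dγ : D.d γ = -(α * β)) (dη : D.d η = β * γ) (hαβ : φ (α * β) = 0)
    (hαη : φ (α * η) = 0) (hψβγ : ψ (β * γ) = 0) (hαγ : φ (α * γ) = ψ (α * β))
    {x : A} (hx : x ∈ Submodule.span ℝ {α, β, γ, η}) : φ (x * α) = ψ (D.d x) := by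
  have key : Set.EqOn (φ ∘ₗ LinearMap.mulRight ℝ α) (ψ ∘ₗ D.d) {α, β, γ, η} := by
    rintro _ (rfl | rfl | rfl | rfl) <;>
      simp [D.mul_self_eq_zero_of_mem_deg_one hα, D.mul_anticomm_of_mem_deg_one hβ hα,
        D.mul_anticomm_of_mem_deg_one hγ hα, D.mul_anticomm_of_mem_deg_one hη hα,
        dα, dβ, dγ, dη, hαβ, hαη, hψβγ, hαγ]
  exact LinearMap.eqOn_span key hx

end GCDGA

theorem nilmanifold4_massey_nontrivial_general {A : Type} [Ring A] [Algebra ℝ A] (D : GCDGA A)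
    (α β γ η : A)
    (hα : α ∈ D.deg 1) (hβ : β ∈ D.deg 1) (hγ : γ ∈ D.deg 1) (hη : η ∈ D.deg 1)
    (dα : D.d α = 0) (dβ : D.d β = 0) (dγ : D.d γ = -(α * β)) (dη : D.d η = β * γ)
    (hfree : LinearIndependent ℝ
      ![(1 : A), α, β, γ, η,
        α * β, α * γ, α * η, β * γ, β * η, γ * η,
        α * β * γ, α * β * η, α * γ * η, β * γ * η,
        α * β * γ * η])
    (hspan : Submodule.span ℝ
      (Set.range ![(1 : A), α, β, γ, η,
        α * β, α * γ, α * η, β * γ, β * η, γ * η,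
        α * β * γ, α * β * η, α * γ * η, β * γ * η,
        α * β * γ * η]) = ⊤)
    (hdeg1 : D.deg 1 = Submodule.span ℝ {α, β, γ, η}) :
    -- the Massey product ⟨[β],[α],[α]⟩ is defined, with γ a primitive of βα:
    D.d γ = β * α ∧
    -- [γα] is nonzero in H²:
    (¬ ∃ b ∈ D.deg 1, γ * α = D.d b) ∧
    -- nontriviality: no defining system gives a representative in [β]H¹ + H¹[α]:
    (∀ ξ w : A, ξ ∈ D.deg 1 → w ∈ D.deg 1 → D.d ξ = β * α → D.d w = α * α →
      ¬ ∃ σ c c' : A, σ ∈ D.deg 1 ∧ c ∈ D.deg 1 ∧ c' ∈ D.deg 1 ∧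
        D.d c = 0 ∧ D.d c' = 0 ∧
        β * w + ξ * α = D.d σ + β * c + c' * α) := by
  have hdγ : D.d γ = β * α := by rw [dγ, D.mul_anticomm_of_mem_deg_one hβ hα]
  let B := Module.Basis.mk hfree hspan.ge
  let φ := B.coord 6
  let ψ := B.coord 5
  have hφαβ : φ (α * β) = 0 := Module.Basis.mk_coord_apply_ne (i := 6) (j := 5) (by decide)
  have hφαγ : φ (α * γ) = 1 := Module.Basis.mk_coord_apply_eq 6
  have hφαη : φ (α * η) = 0 := Module.Basis.mk_coord_apply_ne (i := 6) (j := 7) (by decide)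
  have hφβγ : φ (β * γ) = 0 := Module.Basis.mk_coord_apply_ne (i := 6) (j := 8) (by decide)
  have hφβη : φ (β * η) = 0 := Module.Basis.mk_coord_apply_ne (i := 6) (j := 9) (by decide)
  have hψαβ : ψ (α * β) = 1 := Module.Basis.mk_coord_apply_eq 5
  have hψβγ : ψ (β * γ) = 0 := Module.Basis.mk_coord_apply_ne (i := 5) (j := 8) (by decide)
  have hψβα : ψ (β * α) ≠ 0 := by
    rw [D.mul_anticomm_of_mem_deg_one hβ hα, map_neg, hψαβ]
    norm_num
  have obstruction := D.massey_ne_indeterminacy_of_separating φ ψ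
    (fun x hx => D.apply_d_eq_zero_of_mem_span φ dα dβ dγ dη hφαβ hφβγ (hdeg1 ▸ hx))
    (fun x hx => D.apply_mul_left_eq_zero_of_mem_span φ hα hβ hφαβ hφβγ hφβη
      (hdeg1 ▸ hx))
    (fun x hx => D.apply_mul_right_eq_apply_d_of_mem_span φ ψ hα hβ hγ hη dα dβ dγ dη
      hφαβ hφαη hψβγ (hφαγ.trans hψαβ.symm) (hdeg1 ▸ hx))
    hψβα
  refine ⟨hdγ, ?_, ?_⟩
  · rintro ⟨b, hb, hγα⟩
    have zero_mem := (D.deg 1).zero_mem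
    exact obstruction hγ zero_mem hb zero_mem zero_mem hdγ (map_zero _) (by simpa using hγα)
  · rintro ξ w hξ hw hdξ - ⟨σ, c, c', hσ, hc, hc', -, hdc', h⟩
    exact obstruction hξ hw hσ hc hc' hdξ hdc' h

/-- In the free graded-commutative DGA Λ(α,β,γ,η) on four degree-1
generators with dα = dβ = 0, dγ = −αβ, dη = βγ (the minimal model of the 4-dimensional
nilmanifold E), the Massey product ⟨[β],[α],[α]⟩ is defined (βα = dγ and αα = 0) and is
represented by γα, which is nonzero in H² modulo the indeterminacy [β]H¹ + H¹[α]. -/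
theorem nilmanifold4_massey_nontrivial {A : Type} [Ring A] [Algebra ℝ A] (D : GCDGA A)
    (α β γ η : A)
    (hα : α ∈ D.deg 1) (hβ : β ∈ D.deg 1) (hγ : γ ∈ D.deg 1) (hη : η ∈ D.deg 1)
    (dα : D.d α = 0) (dβ : D.d β = 0) (dγ : D.d γ = -(α * β)) (dη : D.d η = β * γ)
    (hfree : LinearIndependent ℝ
      ![(1 : A), α, β, γ, η,
        α * β, α * γ, α * η, β * γ, β * η, γ * η,
        α * β * γ, α * β * η, α * γ * η, β * γ * η,
        α * β * γ * η])
    (hspan : Submodule.span ℝ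
      (Set.range ![(1 : A), α, β, γ, η,
        α * β, α * γ, α * η, β * γ, β * η, γ * η,
        α * β * γ, α * β * η, α * γ * η, β * γ * η,
        α * β * γ * η]) = ⊤)
    (hdeg0 : D.deg 0 = Submodule.span ℝ {(1 : A)})
    (hdeg1 : D.deg 1 = Submodule.span ℝ {α, β, γ, η})
    (hdeg2 : D.deg 2 = Submodule.span ℝ {α * β, α * γ, α * η, β * γ, β * η, γ * η})
    (hdeg3 : D.deg 3 = Submodule.span ℝ
      {α * β * γ, α * β * η, α * γ * η, β * γ * η})
    (hdeg4 : D.deg 4 = Submodule.span ℝ {α * β * γ * η})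
    (hdeg5 : ∀ n : ℕ, 5 ≤ n → D.deg n = ⊥) :
    -- the Massey product ⟨[β],[α],[α]⟩ is defined, with γ a primitive of βα:
    D.d γ = β * α ∧
    -- [γα] is nonzero in H²:
    (¬ ∃ b ∈ D.deg 1, γ * α = D.d b) ∧
    -- nontriviality: no defining system gives a representative in [β]H¹ + H¹[α]:
    (∀ ξ w : A, ξ ∈ D.deg 1 → w ∈ D.deg 1 → D.d ξ = β * α → D.d w = α * α →
      ¬ ∃ σ c c' : A, σ ∈ D.deg 1 ∧ c ∈ D.deg 1 ∧ c' ∈ D.deg 1 ∧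
        D.d c = 0 ∧ D.d c' = 0 ∧
        β * w + ξ * α = D.d σ + β * c + c' * α) :=
  nilmanifold4_massey_nontrivial_general D α β γ η hα hβ hγ hη dα dβ dγ dη hfree hspan hdeg1
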